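/- For the hypercube Q_n with n ≥ 3 odd, aw(Q_n,3) = 4, and moreover the unique (up to permuting colors) surjective 3-coloring of Q_n with no rainbow 3-AP colors one vertex x with color 1, its antipode (the complement string) with color 2, and all other vertices with color 3. -/

import Mathlib

namespace AntiVDW

/-- `v 0, v 1, …, v (k-1)` is a `k`-term arithmetic progression in `G`:
consecutive vertices are at a common finite distance `d`. -/
def IsAPSeq {V : Type*} (G : SimpleGraph V) (k : ℕ) (v : ℕ → V) : Prop :=
  ∃ d : ℕ, ∀ i, i + 1 < k → G.Reachable (v i) (v (i + 1)) ∧ G.dist (v i) (v (i + 1)) = d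

/-- `G` contains a `k`-AP that is rainbow under the coloring `c`. -/
def HasRainbowAP {V α : Type*} (G : SimpleGraph V) (k : ℕ) (c : V → α) : Prop :=
  ∃ v : ℕ → V, IsAPSeq G k v ∧ ∀ i j, i < k → j < k → i ≠ j → c (v i) ≠ c (v j)

/-- The anti-van der Waerden number: the least positive `r` such that every
exact (surjective) `r`-coloring of `G` contains a rainbow `k`-AP. -/
noncomputable def aw {V : Type*} (G : SimpleGraph V) (k : ℕ) : ℕ :=
  sInf {r : ℕ | 0 < r ∧ ∀ c : V → Fin r, Function.Surjective c → HasRainbowAP G k c}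

/-- Eccentricity of a vertex. -/
noncomputable def ecc {V : Type*} [Fintype V] (G : SimpleGraph V) (v : V) : ℕ :=
  Finset.univ.sup fun u => G.dist v u

/-- Radius of a graph. -/
noncomputable def rad {V : Type*} [Fintype V] [Nonempty V] (G : SimpleGraph V) : ℕ :=
  Finset.univ.inf' Finset.univ_nonempty (ecc G)

/-- Diameter of a graph. -/
noncomputable def diam {V : Type*} [Fintype V] (G : SimpleGraph V) : ℕ :=
  Finset.univ.sup (ecc G)

/-- The `n`-dimensional hypercube. -/
def hypercube (n : ℕ) : SimpleGraph (Fin n → Bool) where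
  Adj x y := hammingDist x y = 1
  symm := ⟨fun x y h => by show hammingDist y x = 1; rwa [hammingDist_comm]⟩
  loopless := ⟨fun x h => by simp [hammingDist_self] at h⟩

/-!
Write `xᶜ` for the antipode of `x`. Since `d(s, vᶜ) = n - d(s, v)`, two vertices are equidistant
from `s` iff they are equidistant from `sᶜ`. Hence, in a coloring without rainbow 3-APs, when
`c x ≠ c xᶜ` every sphere around `x` either avoids both colors `c x`, `c xᶜ` or uses only them.
If moreover some antipodal pair `z, zᶜ` avoids both colors, so does every vertex equidistant
from `x` and `z`; as `n` is odd, the radii of the avoiding spheres then spread from `d(x, z)` to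
all of `1, …, n - 1`. So `x, xᶜ` is an exceptional pair: every other vertex avoids its colors.

For a surjective 3-coloring, look at the color patterns of the antipodal pairs. If no
exceptional pair arises as above, then either every pair is monochromatic, or one color meets
every pair, or no pair is monochromatic while all three bichromatic patterns occur. Each case is
refuted by placing a vertex at prescribed distances from given ones, using parities (`n` odd).

A surjective 4-coloring merged to 3 colors in two ways (`2 ~ 3`, then `0 ~ 1`) would have two
exceptional pairs, which is impossible once the cube has a fifth vertex.
-/

open Finset

section Hamming

variable {n : ℕ}

lemma hammingDist_eq_sum (x y : Fin n → Bool) :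
    hammingDist x y = ∑ i, if x i ≠ y i then 1 else 0 :=
  card_filter _ _

lemma card_eq_sum_ite (A : Finset (Fin n)) : #A = ∑ i, if i ∈ A then 1 else 0 := by
  simp

lemma hammingDist_compl_add (x y : Fin n → Bool) :
    hammingDist x yᶜ + hammingDist x y = n := by
  rw [hammingDist_eq_sum, hammingDist_eq_sum, ← sum_add_distrib]
  calc _ = ∑ _i : Fin n, 1 := sum_congr rfl fun i _ => by by_cases h : x i = y i <;> simp [h]
    _ = n := by simp

lemma hammingDist_compl_right (x y : Fin n → Bool) :
    hammingDist x yᶜ = n - hammingDist x y := by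
  have := hammingDist_compl_add x y
  omega

lemma hammingDist_compl_left (x y : Fin n → Bool) :
    hammingDist xᶜ y = n - hammingDist x y := by
  rw [hammingDist_comm, hammingDist_compl_right, hammingDist_comm]

lemma hammingDist_compl_compl (x y : Fin n → Bool) : hammingDist xᶜ yᶜ = hammingDist x y := by
  have := hammingDist_compl_add x y
  rw [hammingDist_compl_left, hammingDist_compl_right]
  omega

lemma hammingDist_le (x y : Fin n → Bool) : hammingDist x y ≤ n := by
  simpa using hammingDist_le_card_fintype (x := x) (y := y)

lemma hammingDist_self_compl (x : Fin n → Bool) : hammingDist x xᶜ = n := by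
  simp [hammingDist_compl_right]

lemma eq_compl_of_hammingDist_eq_n {x y : Fin n → Bool} (h : hammingDist x y = n) : y = xᶜ := by
  rw [← hammingDist_eq_zero, hammingDist_compl_right, hammingDist_comm, h, Nat.sub_self]

lemma card_filter_apply_eq (x z : Fin n → Bool) : #{i | x i = z i} = n - hammingDist x z := by
  rw [← hammingDist_compl_right]
  congr 1
  ext i
  simp

lemma hammingDist_eq_add_of_agree {s u v : Fin n → Bool} (h : ∀ i, u i ≠ v i → s i = u i) :
    hammingDist s v = hammingDist s u + hammingDist u v := by
  simp only [hammingDist_eq_sum, ← sum_add_distrib]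
  refine sum_congr rfl fun i _ => ?_
  by_cases hi : u i = v i
  · simp [hi]
  · simp [h i hi, hi]

lemma exists_hammingDist_add_hammingDist (a p b : Fin n → Bool) :
    ∃ k, hammingDist a p + hammingDist p b = hammingDist a b + 2 * k := by
  refine ⟨#{i | a i ≠ p i ∧ p i ≠ b i}, ?_⟩
  simp only [hammingDist_eq_sum, card_filter, mul_sum, ← sum_add_distrib]
  refine sum_congr rfl fun i _ => ?_
  cases a i <;> cases p i <;> cases b i <;> simp

lemma exists_flip (x z : Fin n → Bool) {A B : Finset (Fin n)} (hA : ∀ i ∈ A, x i ≠ z i)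
    (hB : ∀ i ∈ B, x i = z i) :
    ∃ s, (∀ i, i ∉ A → i ∉ B → s i = x i) ∧ hammingDist x s = #A + #B ∧
      hammingDist z s + #A = hammingDist x z + #B := by
  refine ⟨fun i => if i ∈ A ∨ i ∈ B then !x i else x i, fun i hiA hiB => by simp [hiA, hiB],
    ?_, ?_⟩
  all_goals
    simp only [hammingDist_eq_sum, card_eq_sum_ite, ← sum_add_distrib]
    refine sum_congr rfl fun i _ => ?_
    by_cases hiA : i ∈ A
    · have := hA i hiA
      have hiB : i ∉ B := fun hiB => this (hB i hiB)
      revert this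
      cases x i <;> cases z i <;> simp [hiA, hiB]
    · by_cases hiB : i ∈ B
      · have := hB i hiB
        revert this
        cases x i <;> cases z i <;> simp [hiA, hiB]
      · cases x i <;> cases z i <;> simp [hiA, hiB]

lemma exists_hammingDist_eq_add (x z : Fin n → Bool) {o u : ℕ} (ho : o ≤ hammingDist x z)
    (hu : u ≤ n - hammingDist x z) :
    ∃ s, hammingDist x s = o + u ∧ hammingDist z s + o = hammingDist x z + u := by
  obtain ⟨A, hA, rfl⟩ := exists_subset_card_eq (s := {i | x i ≠ z i}) ho
  obtain ⟨B, hB, rfl⟩ := exists_subset_card_eq (s := {i | x i = z i})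
    (card_filter_apply_eq x z ▸ hu)
  obtain ⟨s, -, hs⟩ := exists_flip x z (fun i hi => (mem_filter.1 (hA hi)).2)
    (fun i hi => (mem_filter.1 (hB hi)).2)
  exact ⟨s, hs⟩

lemma exists_hammingDist_eq (x : Fin n → Bool) {k : ℕ} (hk : k ≤ n) :
    ∃ z, hammingDist x z = k := by
  obtain ⟨z, hz, -⟩ := exists_hammingDist_eq_add x x (o := 0) (u := k) (by simp) (by simpa)
  exact ⟨z, by simpa using hz⟩

lemma exists_midpoint {x z : Fin n → Bool} (h : Even (hammingDist x z)) :
    ∃ s, hammingDist x s = hammingDist x z / 2 ∧ hammingDist z s = hammingDist x z / 2 := by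
  obtain ⟨s, h₁, h₂⟩ :=
    exists_hammingDist_eq_add x z (o := hammingDist x z / 2) (u := 0) (by omega) (by omega)
  obtain ⟨k, hk⟩ := h
  exact ⟨s, by omega, by omega⟩

lemma exists_middle_of_hammingDist_eq_one {m : ℕ} (hm : n = 2 * m + 1) {u v : Fin n → Bool}
    (huv : hammingDist u v = 1) (z : Fin n → Bool) :
    ∃ s, hammingDist s u = m ∧ hammingDist s v = m + 1 ∧
      (hammingDist s z = m ∨ hammingDist s z = m + 1) := by
  set F : Finset (Fin n) := {i | u i ≠ v i}
  have hF : #F = 1 := huv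
  have hD : #{i | u i ≠ z i} = hammingDist u z := rfl
  have hD' := le_card_sdiff F {i | u i ≠ z i}
  have hE := card_filter_apply_eq u z
  have hE' := le_card_sdiff F {i | u i = z i}
  have ht := hammingDist_le u z
  obtain ⟨A, hA, hAcard⟩ := exists_subset_card_eq (s := ({i | u i ≠ z i} : Finset (Fin n)) \ F)
    (n := hammingDist u z / 2) (by omega)
  obtain ⟨B, hB, hBcard⟩ := exists_subset_card_eq (s := ({i | u i = z i} : Finset (Fin n)) \ F)
    (n := m - hammingDist u z / 2) (by omega)
  obtain ⟨s, hsu, h₁, h₂⟩ := exists_flip u z (A := A) (B := B)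
    (fun i hi => (mem_filter.1 (mem_sdiff.1 (hA hi)).1).2)
    (fun i hi => (mem_filter.1 (mem_sdiff.1 (hB hi)).1).2)
  have hsv := hammingDist_eq_add_of_agree (s := s) fun i hi =>
    hsu i (fun h => (mem_sdiff.1 (hA h)).2 (by simpa [F] using hi))
      (fun h => (mem_sdiff.1 (hB h)).2 (by simpa [F] using hi))
  rw [hammingDist_comm u s] at h₁
  rw [hammingDist_comm z s] at h₂
  exact ⟨s, by omega, by omega, by omega⟩

end Hamming

section Hypercube

variable {n : ℕ}

lemma exists_walk_length_eq_hammingDist (x y : Fin n → Bool) :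
    ∃ p : (hypercube n).Walk x y, p.length = hammingDist x y := by
  induction h : hammingDist x y generalizing x with
  | zero =>
    rw [hammingDist_eq_zero] at h
    subst h
    exact ⟨.nil, rfl⟩
  | succ k ih =>
    obtain ⟨i, hi⟩ : ∃ i, x i ≠ y i := by
      by_contra! h'
      simp [funext h'] at h
    set x' := Function.update x i (y i)
    have hxx' : (hypercube n).Adj x x' := by
      change hammingDist x x' = 1
      rw [hammingDist_eq_sum]
      calc _ = ∑ j, if j = i then 1 else 0 := sum_congr rfl fun j _ => by
              by_cases hj : j = i
              · subst hj
                simp [x', hi]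
              · simp [x', hj]
        _ = 1 := by simp
    have hsplit : hammingDist x y = hammingDist x x' + hammingDist x' y :=
      hammingDist_eq_add_of_agree fun j hj => by
        by_cases hji : j = i
        · subst hji
          simp [x'] at hj
        · simp [x', Function.update_of_ne hji]
    obtain ⟨p, hp⟩ := ih x' (by have : hammingDist x x' = 1 := hxx'; omega)
    exact ⟨.cons hxx' p, by simp [hp]⟩

lemma hammingDist_le_length {x y : Fin n → Bool} (p : (hypercube n).Walk x y) :
    hammingDist x y ≤ p.length := by
  induction p with
  | nil => simp
  | @cons u v w h p ih =>
    have h₁ : hammingDist u v = 1 := h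
    have := hammingDist_triangle u v w
    rw [SimpleGraph.Walk.length_cons]
    omega

lemma hypercube_reachable (x y : Fin n → Bool) : (hypercube n).Reachable x y :=
  ⟨(exists_walk_length_eq_hammingDist x y).choose⟩

lemma hypercube_dist (x y : Fin n → Bool) : (hypercube n).dist x y = hammingDist x y := by
  obtain ⟨p, hp⟩ := exists_walk_length_eq_hammingDist x y
  obtain ⟨q, hq⟩ := (hypercube_reachable x y).exists_walk_length_eq_dist
  exact le_antisymm (hp ▸ SimpleGraph.dist_le p) (hq ▸ hammingDist_le_length q)

lemma exists_hammingDist_eq_one_ne {α : Type*} (c : (Fin n → Bool) → α) {p q : Fin n → Bool}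
    (h : c p ≠ c q) : ∃ u v, hammingDist u v = 1 ∧ c u ≠ c v := by
  obtain ⟨d, -, hd₁, hd₂⟩ :=
    (hypercube_reachable p q).some.exists_boundary_dart {w | c w = c p} rfl fun e => h e.symm
  exact ⟨d.fst, d.snd, d.adj, fun e => hd₂ (e.symm.trans hd₁)⟩

end Hypercube

section Colorings

variable {n : ℕ} {α : Type*}

def IsRainbowFree (c : (Fin n → Bool) → α) : Prop :=
  ∀ ⦃s a b⦄, hammingDist s a = hammingDist s b → c a ≠ c s → c b ≠ c s → c a = c b

lemma not_hasRainbowAP_iff {c : (Fin n → Bool) → α} :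
    ¬ HasRainbowAP (hypercube n) 3 c ↔ IsRainbowFree c := by
  constructor
  · intro h s a b hd ha hb
    by_contra hab
    refine h ⟨fun i => if i = 0 then a else if i = 1 then s else b,
      ⟨hammingDist s a, fun i hi => ?_⟩, fun i j hi hj hij => ?_⟩
    · have : i < 2 := by omega
      interval_cases i <;> simp [hypercube_reachable, hypercube_dist, hammingDist_comm, hd]
    · interval_cases i <;> interval_cases j <;> simp_all [eq_comm]
  · rintro hc ⟨v, ⟨d, hd⟩, hv⟩
    have h₀ := (hd 0 (by norm_num)).2
    have h₁ := (hd 1 (by norm_num)).2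
    rw [hypercube_dist, hammingDist_comm] at h₀
    rw [hypercube_dist] at h₁
    exact hv 0 2 (by norm_num) (by norm_num) (by norm_num)
      (hc (h₀.trans h₁.symm) (hv 0 1 (by norm_num) (by norm_num) (by norm_num))
        (hv 2 1 (by norm_num) (by norm_num) (by norm_num)))

def AvoidsPair (c : (Fin n → Bool) → α) (x w : Fin n → Bool) : Prop :=
  c w ≠ c x ∧ c w ≠ c xᶜ

def IsExceptionalPair (c : (Fin n → Bool) → α) (x : Fin n → Bool) : Prop :=
  c x ≠ c xᶜ ∧ ∀ v, v ≠ x → v ≠ xᶜ → AvoidsPair c x v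

end Colorings

lemma forall_lt_of_even_step {n : ℕ} (hn : Odd n) {P : ℕ → Prop}
    (step : ∀ e, 0 < e → e < n → Even e → P e → P (n - e) →
      ∀ δ, e / 2 ≤ δ → δ ≤ n - e / 2 → P δ)
    {k : ℕ} (hk₀ : 0 < k) (hkn : k < n) (hk : P k) (hk' : P (n - k)) :
    ∀ δ, 0 < δ → δ < n → P δ := by
  obtain ⟨m, rfl⟩ := hn
  -- if `[a, n - a]` is covered and `a ≥ 2`, the even `e ∈ {a, a + 1}` covers the longer
  -- interval `[e / 2, n - e / 2]`
  have descend : ∀ a, 0 < a → a ≤ m → (∀ δ, a ≤ δ → δ ≤ 2 * m + 1 - a → P δ) →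
      ∀ δ, 0 < δ → δ < 2 * m + 1 → P δ := by
    intro a
    induction a using Nat.strong_induction_on with
    | _ a ih =>
      intro ha ham hP
      by_cases ha₁ : a = 1
      · intro δ h₁ h₂
        exact hP δ (by omega) (by omega)
      · have he : Even (a + a % 2) := Nat.even_iff.2 (by omega)
        exact ih _ (by omega) (by omega) (by omega)
          (step _ (by omega) (by omega) he (hP _ (by omega) (by omega))
            (hP _ (by omega) (by omega)))
  rcases Nat.even_or_odd k with ⟨j, rfl⟩ | ⟨j, rfl⟩
  · exact descend j (by omega) (by omega)
      (by simpa [show (j + j) / 2 = j by omega] using step (j + j) hk₀ hkn ⟨j, rfl⟩ hk hk')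
  · have he : Even (2 * m + 1 - (2 * j + 1)) := ⟨m - j, by omega⟩
    have := step _ (by omega) (by omega) he hk' (by rwa [Nat.sub_sub_self hkn.le])
    exact descend (m - j) (by omega) (by omega) fun δ h₁ h₂ => this δ (by omega) (by omega)

namespace IsRainbowFree

variable {n : ℕ} {α : Type*} {c : (Fin n → Bool) → α}

lemma comp (hc : IsRainbowFree c) {β : Type*} (f : α → β) : IsRainbowFree (f ∘ c) :=
  fun _ _ _ h ha hb => congrArg f (hc h (fun e => ha (congrArg f e)) (fun e => hb (congrArg f e)))

lemma center_eq_or (hc : IsRainbowFree c) {s a b : Fin n → Bool}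
    (h : hammingDist s a = hammingDist s b) (hab : c a ≠ c b) : c s = c a ∨ c s = c b := by
  by_contra! h'
  exact hab (hc h (Ne.symm h'.1) (Ne.symm h'.2))

lemma eq_or_eq_of_hammingDist_eq (hc : IsRainbowFree c) {s a b e : Fin n → Bool}
    (hb : hammingDist s b = hammingDist s a) (he : hammingDist s e = hammingDist s a)
    (hab : c a ≠ c b) : c e = c a ∨ c e = c b := by
  rcases hc.center_eq_or hb.symm hab with h | h
  · by_cases hes : c e = c s
    · exact .inl (hes.trans h)
    · exact .inr (hc (he.trans hb.symm) hes (h ▸ hab.symm))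
  · by_cases hes : c e = c s
    · exact .inr (hes.trans h)
    · exact .inl (hc he hes (h ▸ hab))

lemma avoidsPair_of_hammingDist_eq (hc : IsRainbowFree c) {x r w : Fin n → Bool}
    (hx : c x ≠ c xᶜ) (hr : AvoidsPair c x r) (h : hammingDist x r = hammingDist x w) :
    AvoidsPair c x w := by
  refine ⟨fun hw => hr.1 ?_, fun hw => hr.2 ?_⟩
  · have h' : hammingDist xᶜ r = hammingDist xᶜ w := by
      rw [hammingDist_compl_left, hammingDist_compl_left, h]
    exact (hc h' hr.2 (hw ▸ hx)).trans hw
  · exact (hc h hr.1 (hw ▸ hx.symm)).trans hw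

lemma avoidsPair_of_equidistant (hc : IsRainbowFree c) {x z s : Fin n → Bool}
    (hx : c x ≠ c xᶜ) (hz : AvoidsPair c x z) (hz' : AvoidsPair c x zᶜ)
    (h : hammingDist s x = hammingDist s z) : AvoidsPair c x s := by
  refine ⟨fun hs => hz'.2 ?_, fun hs => hz.1 ?_⟩
  · have h' : hammingDist s xᶜ = hammingDist s zᶜ := by
      rw [hammingDist_compl_right, hammingDist_compl_right, h]
    exact (hc h' (hs ▸ hx.symm) (hs ▸ hz'.1)).symm
  · exact (hc h (hs ▸ hx) (hs ▸ hz.2)).symm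

lemma avoidsPair_of_even (hc : IsRainbowFree c) {x z w : Fin n → Bool} (hx : c x ≠ c xᶜ)
    (hz : AvoidsPair c x z) (hz' : AvoidsPair c x zᶜ) (he : Even (hammingDist x z))
    (h₁ : hammingDist x z / 2 ≤ hammingDist x w) (h₂ : hammingDist x w ≤ n - hammingDist x z / 2) :
    AvoidsPair c x w := by
  obtain ⟨k, hk⟩ := he
  obtain ⟨s, hxs, hzs⟩ := exists_hammingDist_eq_add x z (o := k) (u := hammingDist x w - k)
    (by omega) (by omega)
  have hs : hammingDist s x = hammingDist s z := by
    rw [hammingDist_comm s x, hammingDist_comm s z]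
    omega
  exact hc.avoidsPair_of_hammingDist_eq hx (hc.avoidsPair_of_equidistant hx hz hz' hs)
    (by omega)

theorem isExceptionalPair (hc : IsRainbowFree c) (hn : Odd n) {x z : Fin n → Bool}
    (hx : c x ≠ c xᶜ) (hz : AvoidsPair c x z) (hz' : AvoidsPair c x zᶜ) :
    IsExceptionalPair c x := by
  refine ⟨hx, fun v hv hv' => ?_⟩
  have hd₀ : 0 < hammingDist x z := hammingDist_pos.2 fun e => hz.1 (e ▸ rfl)
  have hdn : hammingDist x z < n := lt_of_le_of_ne (hammingDist_le x z)
    fun e => hz.2 (eq_compl_of_hammingDist_eq_n e ▸ rfl)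
  have key := forall_lt_of_even_step hn (P := fun δ => ∀ w, hammingDist x w = δ → AvoidsPair c x w)
    (fun e _ he hev hPe hPe' δ h₁ h₂ w hw => by
      obtain ⟨y, hy⟩ := exists_hammingDist_eq x he.le
      exact hc.avoidsPair_of_even hx (hPe y hy) (hPe' yᶜ (by rw [hammingDist_compl_right, hy]))
        (hy ▸ hev) (hy ▸ hw ▸ h₁) (hy ▸ hw ▸ h₂))
    hd₀ hdn (fun w hw => hc.avoidsPair_of_hammingDist_eq hx hz hw.symm)
    (fun w hw => hc.avoidsPair_of_hammingDist_eq hx hz' (by rw [hw, hammingDist_compl_right]))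
  exact key _ (hammingDist_pos.2 (Ne.symm hv))
    (lt_of_le_of_ne (hammingDist_le x v) fun e => hv' (eq_compl_of_hammingDist_eq_n e)) v rfl

theorem false_of_compl_invariant (hc : IsRainbowFree c) (hn : Odd n)
    (hsym : ∀ v, c vᶜ = c v) {u v z : Fin n → Bool} (huv : hammingDist u v = 1)
    (hcuv : c u ≠ c v) (hzu : c z ≠ c u) (hzv : c z ≠ c v) : False := by
  obtain ⟨m, hm⟩ := hn
  obtain ⟨s, hsu, hsv, hsz⟩ := exists_middle_of_hammingDist_eq_one hm huv z
  have hsv' : hammingDist s vᶜ = m := by rw [hammingDist_compl_right]; omega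
  have hsu' : hammingDist s uᶜ = m + 1 := by rw [hammingDist_compl_right]; omega
  rcases hsz with hsz | hsz
  · rcases hc.eq_or_eq_of_hammingDist_eq (hsv'.trans hsu.symm) (hsz.trans hsu.symm)
      (by rwa [hsym]) with h | h
    · exact hzu h
    · exact hzv (h.trans (hsym v))
  · rcases hc.eq_or_eq_of_hammingDist_eq (hsv.trans hsu'.symm) (hsz.trans hsu'.symm)
      (by rwa [hsym]) with h | h
    · exact hzu (h.trans (hsym u))
    · exact hzv h

lemma eq_of_hammingDist_eq (hc : IsRainbowFree c) {p q w : Fin n → Bool} (hp : c p ≠ c pᶜ)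
    (hq : c q ≠ c pᶜ) (hpq : c q ≠ c p) (h : hammingDist p w = hammingDist p q) :
    c w = c q := by
  by_cases hw : c w = c p
  · exact hc (by rw [hammingDist_compl_left, hammingDist_compl_left, h]) (hw ▸ hp) hq
  · exact hc h hw hpq

lemma hammingDist_ne_of_forall_ne_compl_eq (hc : IsRainbowFree c) {W : α}
    (hW : ∀ v, c v ≠ W → c vᶜ = W) {a b : Fin n → Bool} (ha : c a ≠ W) (hb : c b ≠ W)
    (hab : c a ≠ c b) (s : Fin n → Bool) : hammingDist s a ≠ hammingDist s b := by
  intro h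
  have h' : hammingDist sᶜ a = hammingDist sᶜ b := by
    rw [hammingDist_compl_left, hammingDist_compl_left, h]
  have hs : c s ≠ W := by
    rcases hc.center_eq_or h hab with e | e <;> rw [e] <;> assumption
  rcases hc.center_eq_or h' hab with e | e
  · exact ha (e.symm.trans (hW s hs))
  · exact hb (e.symm.trans (hW s hs))

theorem eq_of_forall_ne_compl_eq (hc : IsRainbowFree c) (hn : Odd n) {W : α}
    (hW : ∀ v, c v ≠ W → c vᶜ = W) {a b : Fin n → Bool} (ha : c a ≠ W) (hb : c b ≠ W) :
    c a = c b := by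
  induction hk : n - hammingDist a b using Nat.strong_induction_on generalizing a b with
  | _ k ih =>
  by_contra! hab
  have hd : hammingDist a b < n := lt_of_le_of_ne (hammingDist_le a b) fun e =>
    hb (eq_compl_of_hammingDist_eq_n e ▸ hW a ha)
  have hodd : Odd (hammingDist a b) := by
    rw [← Nat.not_even_iff_odd]
    intro he
    obtain ⟨s, hs₁, hs₂⟩ := exists_midpoint he
    exact hc.hammingDist_ne_of_forall_ne_compl_eq hW ha hb hab s
      (by rw [hammingDist_comm s a, hammingDist_comm s b, hs₁, hs₂])
  obtain ⟨j, hj⟩ := hodd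
  obtain ⟨m, hm⟩ := hn
  have hb' : c b ≠ c bᶜ := by rw [hW b hb]; exact hb
  by_cases h₃ : n ≤ 3 * hammingDist a b
  · -- `a₂` takes the color of `a`, so `a₂ᶜ` (colored `W`) and `b` are equidistant from `a`
    obtain ⟨a₂, h₁, h₂⟩ := exists_hammingDist_eq_add a b (o := m - j) (u := m - j)
      (by omega) (by omega)
    have hca₂ : c a₂ = c a := hc.eq_of_hammingDist_eq hb' (by rwa [hW b hb]) hab
      (by rw [hammingDist_comm b a]; omega)
    have h' : hammingDist a a₂ᶜ = hammingDist a b := by rw [hammingDist_compl_right]; omega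
    exact hb ((hc h' (by rw [hW a₂ (hca₂ ▸ ha)]; exact Ne.symm ha) (Ne.symm hab)).symm.trans
      (hW a₂ (hca₂ ▸ ha)))
  · -- `a', b'` carry the colors of `a, b` at distance `3 d(a, b)`: induct on `n - d(a, b)`
    obtain ⟨a', h₁, h₂⟩ := exists_hammingDist_eq_add a b (o := hammingDist a b)
      (u := hammingDist a b) le_rfl (by omega)
    have hca' : c a' = c a := hc.eq_of_hammingDist_eq hb' (by rwa [hW b hb]) hab
      (by rw [hammingDist_comm b a]; omega)
    obtain ⟨b', h₃, h₄⟩ := exists_hammingDist_eq_add a a' (o := 0) (u := hammingDist a b)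
      (by omega) (by omega)
    have hcb' : c b' = c b := hc.eq_of_hammingDist_eq (p := a) (by rw [hW a ha]; exact ha)
      (by rwa [hW a ha]) (Ne.symm hab) (by omega)
    exact hab (hca' ▸ hcb' ▸ ih _ (by omega) (hca' ▸ ha) (hcb' ▸ hb) rfl)

lemma eq_compl_of_hammingDist_compl_eq (hc : IsRainbowFree c) (hmono : ∀ v, c v ≠ c vᶜ)
    {v w s : Fin n → Bool} (hvw : c v ≠ c w) (hbar : c vᶜ = c wᶜ)
    (h : hammingDist s vᶜ = hammingDist s w) : c s = c vᶜ := by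
  have h' : hammingDist s v = hammingDist s wᶜ := by
    have := hammingDist_compl_right s vᶜ
    rw [compl_compl] at this
    rw [this, h, hammingDist_compl_right]
  rcases hc.center_eq_or h (fun e => hmono w (e.symm.trans hbar)) with e | e
  · exact e
  · rcases hc.center_eq_or h' (fun e' => hmono v (e'.trans hbar.symm)) with e' | e'
    · exact absurd (e'.symm.trans e) hvw
    · exact e'.trans hbar.symm

theorem even_hammingDist (hc : IsRainbowFree c) (hn : Odd n) (hmono : ∀ v, c v ≠ c vᶜ)
    {v w : Fin n → Bool} (hvw : c v ≠ c w) (hbar : c vᶜ = c wᶜ) : Even (hammingDist v w) := by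
  by_contra hodd
  rw [Nat.not_even_iff_odd] at hodd
  have he : Even (hammingDist vᶜ w) := by
    obtain ⟨m, hm⟩ := hn
    obtain ⟨j, hj⟩ := hodd
    have := hammingDist_le v w
    exact ⟨m - j, by rw [hammingDist_compl_left]; omega⟩
  obtain ⟨s, h₁, h₂⟩ := exists_midpoint he
  have hs : hammingDist s vᶜ = hammingDist s w := by
    rw [hammingDist_comm s, hammingDist_comm s, h₁, h₂]
  have hs' : hammingDist sᶜ vᶜ = hammingDist sᶜ w := by
    rw [hammingDist_compl_left, hammingDist_compl_left, hs]
  exact hmono s ((hc.eq_compl_of_hammingDist_compl_eq hmono hvw hbar hs).trans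
    (hc.eq_compl_of_hammingDist_compl_eq hmono hvw hbar hs').symm)

theorem false_of_forall_ne_compl (hc : IsRainbowFree c) (hn : Odd n)
    (hmono : ∀ v, c v ≠ c vᶜ) {x z w : Fin n → Bool} (hxz : c x ≠ c z) (hbar : c xᶜ = c zᶜ)
    (hwx : c w = c x) (hwz : c wᶜ = c z) : False := by
  have h₁ := hc.even_hammingDist hn hmono hxz hbar
  have h₂ := hc.even_hammingDist hn hmono (v := xᶜ) (w := wᶜ)
    (by rw [hbar, hwz]; exact (hmono z).symm) (by rw [compl_compl, compl_compl, hwx])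
  have h₃ := hc.even_hammingDist hn hmono (v := w) (w := zᶜ)
    (by rw [hwx, ← hbar]; exact hmono x) (by rw [compl_compl, hwz])
  rw [hammingDist_compl_compl] at h₂
  rw [hammingDist_compl_right] at h₃
  obtain ⟨k, hk⟩ := exists_hammingDist_add_hammingDist x w z
  have := hammingDist_le w z
  obtain ⟨m, hm⟩ := hn
  obtain ⟨a, ha⟩ := h₁
  obtain ⟨b, hb⟩ := h₂
  obtain ⟨d, hd⟩ := h₃
  omega

end IsRainbowFree

lemma fin_three_eq_of_ne {a b d e : Fin 3} (hab : a ≠ b) (hd : d ≠ a ∧ d ≠ b)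
    (he : e ≠ a ∧ e ≠ b) : d = e := by
  revert a b d e
  decide

lemma exists_fin_three_ne (a b : Fin 3) : ∃ d, d ≠ a ∧ d ≠ b := by
  revert a b
  decide

lemma exists_not_mem_of_card_lt {n : ℕ} (s : Finset (Fin n → Bool)) (h : #s < 2 ^ n) :
    ∃ w, w ∉ s := by
  obtain ⟨w, -, hw⟩ := exists_mem_notMem_of_card_lt_card (s := s) (t := univ) (by simpa using h)
  exact ⟨w, hw⟩

namespace IsExceptionalPair

variable {n : ℕ} {α : Type*} {x : Fin n → Bool}

lemma eq_of_ne {c : (Fin n → Bool) → Fin 3} (hx : IsExceptionalPair c x) {v w : Fin n → Bool}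
    (hv : v ≠ x) (hv' : v ≠ xᶜ) (hw : w ≠ x) (hw' : w ≠ xᶜ) : c v = c w :=
  fin_three_eq_of_ne hx.1 (hx.2 v hv hv') (hx.2 w hw hw')

lemma ne_of_eq {c : (Fin n → Bool) → α} (hx : IsExceptionalPair c x) {p q : Fin n → Bool}
    (hpq : p ≠ q) (h : c p = c q) : p ≠ x ∧ p ≠ xᶜ := by
  constructor
  · rintro rfl
    by_cases hq : q = pᶜ
    · exact hx.1 (hq ▸ h)
    · exact (hx.2 q (Ne.symm hpq) hq).1 h.symm
  · rintro rfl
    by_cases hq : q = x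
    · exact hx.1 (hq ▸ h).symm
    · exact (hx.2 q hq (Ne.symm hpq)).2 h.symm

theorem isRainbowFree (hn : Odd n) {c : (Fin n → Bool) → Fin 3} (hx : IsExceptionalPair c x) :
    IsRainbowFree c := by
  intro s a b h ha hb
  by_contra hab
  have pair : ∀ {u w}, c u ≠ c w → (u = x ∨ u = xᶜ) → (w = x ∨ w = xᶜ) → w = uᶜ := by
    rintro u w huw (rfl | rfl) (rfl | rfl) <;> simp_all
  by_cases hs : s = x ∨ s = xᶜ
  · have hsa : a ≠ sᶜ := fun e => hab (congrArg c (e.trans (eq_compl_of_hammingDist_eq_n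
      ((h ▸ e ▸ hammingDist_self_compl s : hammingDist s b = n))).symm))
    have hsb : b ≠ sᶜ := fun e => hab (congrArg c ((eq_compl_of_hammingDist_eq_n
      ((h.symm ▸ e ▸ hammingDist_self_compl s : hammingDist s a = n))).trans e.symm))
    have ha' : ¬(a = x ∨ a = xᶜ) := fun h' => hsa (pair (Ne.symm ha) hs h')
    have hb' : ¬(b = x ∨ b = xᶜ) := fun h' => hsb (pair (Ne.symm hb) hs h')
    push Not at ha' hb'
    exact hab (hx.eq_of_ne ha'.1 ha'.2 hb'.1 hb'.2)
  · push Not at hs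
    have ha' : a = x ∨ a = xᶜ := by
      by_contra! h'
      exact ha (hx.eq_of_ne h'.1 h'.2 hs.1 hs.2)
    have hb' : b = x ∨ b = xᶜ := by
      by_contra! h'
      exact hb (hx.eq_of_ne h'.1 h'.2 hs.1 hs.2)
    rw [pair hab ha' hb', hammingDist_compl_right] at h
    have := hammingDist_le s a
    obtain ⟨m, hm⟩ := hn
    omega

end IsExceptionalPair

namespace IsRainbowFree

variable {n : ℕ} {c : (Fin n → Bool) → Fin 3}

theorem false_of_forall_eq_or_eq (hc : IsRainbowFree c) (hn : Odd n)
    (H : ∀ x z, c x ≠ c xᶜ → c zᶜ = c z → c z = c x ∨ c z = c xᶜ) {y z : Fin n → Bool}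
    (hy : c y ≠ c yᶜ) (hz : AvoidsPair c y z) (hbar : c zᶜ = c yᶜ) : False := by
  have hz' : c z ≠ c zᶜ := hbar ▸ hz.2
  by_cases hw : ∃ w, c w = c y ∧ c wᶜ = c z
  · obtain ⟨w, hw₁, hw₂⟩ := hw
    have hw' : c w ≠ c wᶜ := by rw [hw₁, hw₂]; exact Ne.symm hz.1
    have hmono : ∀ v, c v ≠ c vᶜ := fun v hv => by
      have h₁ := H y v hy hv.symm
      have h₂ := H z v hz' hv.symm
      have h₃ := H w v hw' hv.symm
      rw [hbar] at h₂
      rw [hw₁, hw₂] at h₃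
      grind [AvoidsPair]
    exact hc.false_of_forall_ne_compl hn hmono (Ne.symm hz.1) hbar.symm hw₁ hw₂
  · push Not at hw
    refine hz.1 (hc.eq_of_forall_ne_compl_eq hn (W := c yᶜ) (fun v hv => ?_) hz.2 hy)
    by_contra hv'
    have other : ∀ u, c u ≠ c yᶜ → c u ≠ c y → c u = c z := fun u hu hu' =>
      fin_three_eq_of_ne hy ⟨hu', hu⟩ hz
    by_cases hvy : c v = c y <;> by_cases hvy' : c vᶜ = c y
    · rcases H z v hz' (hvy'.trans hvy.symm) with h | h
      · exact hz.1 (h.symm.trans hvy)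
      · exact hv (h.trans hbar)
    · exact hw v hvy (other _ hv' hvy')
    · exact hw vᶜ hvy' (by rw [compl_compl]; exact other _ hv hvy)
    · rcases H y v hy ((other _ hv' hvy').trans (other _ hv hvy).symm) with h | h
      · exact hvy h
      · exact hv h

theorem exists_isExceptionalPair (hc : IsRainbowFree c) (hn : Odd n)
    (hsurj : Function.Surjective c) : ∃ x, IsExceptionalPair c x := by
  by_contra hnone
  have H : ∀ x z, c x ≠ c xᶜ → c zᶜ = c z → c z = c x ∨ c z = c xᶜ := fun x z hx hz => by
    by_contra! h
    exact hnone ⟨x, hc.isExceptionalPair hn hx h (by rwa [AvoidsPair, hz])⟩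
  by_cases hsym : ∀ v, c vᶜ = c v
  · obtain ⟨p, hp⟩ := hsurj 0
    obtain ⟨q, hq⟩ := hsurj 1
    obtain ⟨u, v, huv, hcuv⟩ := exists_hammingDist_eq_one_ne c (p := p) (q := q) (by simp [hp, hq])
    obtain ⟨γ, hγ⟩ := exists_fin_three_ne (c u) (c v)
    obtain ⟨z, rfl⟩ := hsurj γ
    exact hc.false_of_compl_invariant hn hsym huv hcuv hγ.1 hγ.2
  · push Not at hsym
    obtain ⟨x, hx⟩ := hsym
    obtain ⟨γ, hγ⟩ := exists_fin_three_ne (c x) (c xᶜ)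
    obtain ⟨z, rfl⟩ := hsurj γ
    have hzc : c zᶜ ≠ c z := fun h => by rcases H x z (Ne.symm hx) h with h' | h' <;> simp_all
    by_cases h : c zᶜ = c x
    · exact hc.false_of_forall_eq_or_eq hn H (y := xᶜ) (by rw [compl_compl]; exact hx)
        (by rwa [AvoidsPair, compl_compl, and_comm]) (by rwa [compl_compl])
    · by_cases h' : c zᶜ = c xᶜ
      · exact hc.false_of_forall_eq_or_eq hn H (Ne.symm hx) hγ h'
      · exact hzc (fin_three_eq_of_ne (Ne.symm hx) ⟨h, h'⟩ hγ)

theorem not_surjective_of_fin_four {c : (Fin n → Bool) → Fin 4} (hc : IsRainbowFree c)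
    (hn₃ : 3 ≤ n) (hn : Odd n) : ¬ Function.Surjective c := by
  intro hsurj
  have hφψ : ∀ a : Fin 4, (![0, 1, 2, 2] : Fin 4 → Fin 3) a = 2 ↔
      (![0, 0, 1, 2] : Fin 4 → Fin 3) a ≠ 0 := by decide
  set φ : Fin 4 → Fin 3 := ![0, 1, 2, 2]
  set ψ : Fin 4 → Fin 3 := ![0, 0, 1, 2]
  obtain ⟨x, hx⟩ := (hc.comp φ).exists_isExceptionalPair hn
    ((show Function.Surjective φ by decide).comp hsurj)
  obtain ⟨y, hy⟩ := (hc.comp ψ).exists_isExceptionalPair hn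
    ((show Function.Surjective ψ by decide).comp hsurj)
  obtain ⟨v₂, hv₂⟩ := hsurj 2
  obtain ⟨v₃, hv₃⟩ := hsurj 3
  have hv₂x := hx.ne_of_eq (p := v₂) (q := v₃) (by rintro rfl; simp_all)
    (by simp [hv₂, hv₃, φ])
  have hφv₂ : φ (c v₂) = 2 := by simp [hv₂, φ]
  have hx₂ := hx.2 v₂ hv₂x.1 hv₂x.2
  simp only [AvoidsPair, Function.comp_apply, hφv₂] at hx₂
  have hψx : ψ (c x) = 0 := not_not.1 fun h => hx₂.1 ((hφψ _).2 h).symm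
  have hψx' : ψ (c xᶜ) = 0 := not_not.1 fun h => hx₂.2 ((hφψ _).2 h).symm
  have hxy := hy.ne_of_eq (p := x) (q := xᶜ) (fun e => hx.1 (congrArg _ e))
    (hψx.trans hψx'.symm)
  obtain ⟨w, hw⟩ := exists_not_mem_of_card_lt {x, xᶜ, y, yᶜ}
    (card_le_four.trans_lt (by calc 4 < 2 ^ 3 := by norm_num
                                      _ ≤ 2 ^ n := Nat.pow_le_pow_right (by norm_num) hn₃))
  simp only [mem_insert, mem_singleton, not_or] at hw
  have hφw : φ (c w) = φ (c v₂) := hx.eq_of_ne hw.1 hw.2.1 hv₂x.1 hv₂x.2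
  have hψw : ψ (c w) = ψ (c x) := hy.eq_of_ne hw.2.2.1 hw.2.2.2 hxy.1 hxy.2
  exact (hφψ _).1 (hφw.trans hφv₂) (hψw.trans hψx)

end IsRainbowFree

section PairColoring

variable {n : ℕ}

def pairColoring (x v : Fin n → Bool) : Fin 3 :=
  if v = x then 0 else if v = xᶜ then 1 else 2

lemma isExceptionalPair_pairColoring (hn : n ≠ 0) (x : Fin n → Bool) :
    IsExceptionalPair (pairColoring x) x := by
  have : Nonempty (Fin n) := ⟨⟨0, Nat.pos_of_ne_zero hn⟩⟩
  have hx : xᶜ ≠ x := compl_ne_self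
  exact ⟨by simp [pairColoring, hx], fun v hv hv' => by
    simp [AvoidsPair, pairColoring, hv, hv', hx]⟩

lemma surjective_pairColoring (hn : 2 ≤ n) (x : Fin n → Bool) :
    Function.Surjective (pairColoring x) := by
  have : Nonempty (Fin n) := ⟨⟨0, by omega⟩⟩
  have hx : xᶜ ≠ x := compl_ne_self
  obtain ⟨w, hw⟩ := exists_not_mem_of_card_lt {x, xᶜ} (card_le_two.trans_lt
    (by calc 2 < 2 ^ 2 := by norm_num
             _ ≤ 2 ^ n := Nat.pow_le_pow_right (by norm_num) hn))
  simp only [mem_insert, mem_singleton, not_or] at hw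
  intro k
  fin_cases k
  · exact ⟨x, by simp [pairColoring]⟩
  · exact ⟨xᶜ, by simp [pairColoring, hx]⟩
  · exact ⟨w, by simp [pairColoring, hw.1, hw.2]⟩

end PairColoring

theorem aw_hypercube_three {n : ℕ} (hn₃ : 3 ≤ n) (hn : Odd n) : aw (hypercube n) 3 = 4 := by
  have h₄ : 4 ∈ {r | 0 < r ∧ ∀ c : (Fin n → Bool) → Fin r, Function.Surjective c →
      HasRainbowAP (hypercube n) 3 c} :=
    ⟨by norm_num, fun c hsurj => by
      by_contra h
      exact (not_hasRainbowAP_iff.1 h).not_surjective_of_fin_four hn₃ hn hsurj⟩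
  refine le_antisymm (Nat.sInf_le h₄) (le_csInf ⟨4, h₄⟩ fun r ⟨hr, hall⟩ => ?_)
  by_contra! hr₄
  set g : Fin 3 → Fin r := fun i => ⟨min i (r - 1), by omega⟩
  have hg : Function.Surjective g := fun j => ⟨⟨j, by omega⟩, Fin.ext (by simp [g]; omega)⟩
  have hc := ((isExceptionalPair_pairColoring (by omega) (default : Fin n → Bool)).isRainbowFree
    hn).comp g
  exact not_hasRainbowAP_iff.2 hc (hall _ (hg.comp (surjective_pairColoring (by omega) _)))

/-- For odd `n ≥ 3`, `aw(Q_n,3) = 4`, and the unique (up to color permutation)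
rainbow-3-AP-free surjective 3-coloring colors some vertex and its antipode with two
distinct colors and all remaining vertices with the third color. -/
theorem stmt_13 (n : ℕ) (hn : 3 ≤ n) (hodd : Odd n) :
    aw (hypercube n) 3 = 4 ∧
      ∀ c : (Fin n → Bool) → Fin 3, Function.Surjective c →
        ¬ HasRainbowAP (hypercube n) 3 c →
        ∃ x : Fin n → Bool,
          c x ≠ c (fun i => !(x i)) ∧
          (∀ y, y ≠ x → y ≠ (fun i => !(x i)) → c y ≠ c x ∧ c y ≠ c (fun i => !(x i))) ∧
          (∀ y z, y ≠ x → y ≠ (fun i => !(x i)) → z ≠ x → z ≠ (fun i => !(x i)) →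
            c y = c z) := by
  refine ⟨aw_hypercube_three hn hodd, fun c hsurj hc => ?_⟩
  obtain ⟨x, hx⟩ := (not_hasRainbowAP_iff.1 hc).exists_isExceptionalPair hodd hsurj
  exact ⟨x, hx.1, hx.2, fun y z => hx.eq_of_ne⟩

end AntiVDW
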